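/- arXiv:1602.08515 — 3 statements merged into one kernel-verified Lean document; each statement's English description precedes it below -/
import Mathlib

section
/- Let T_f be a spanning tree of the L-by-T grid (with only forward and downward arcs) in which every vertex is accessible from row one via a directed path in T_f. For l ∈ [L] and i ∈ [T], define κ_l(i) as the smallest j such that T_f contains a directed path from v_{1,j} to v_{l,i}. Then κ_l is non-decreasing in i. -/
/-- Arcs of the `L`-by-`T` grid (0-indexed): `(true,l,t)` is the downward arc
`(l,t)→(l+1,t)` and `(false,l,t)` is the forward arc `(l,t)→(l,t+1)`. -/
abbrev GArc := Bool × ℕ × ℕ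

def gTail (a : GArc) : ℕ × ℕ := (a.2.1, a.2.2)

def gHead (a : GArc) : ℕ × ℕ := if a.1 then (a.2.1 + 1, a.2.2) else (a.2.1, a.2.2 + 1)

def ValidArc (L T : ℕ) (a : GArc) : Prop :=
  if a.1 then a.2.1 + 1 < L ∧ a.2.2 < T else a.2.1 < L ∧ a.2.2 + 1 < T

/-- The arc set `S` contains an undirected cycle. -/
def HasUndirCycle {V A : Type*} (tail head : A → V) (S : Set A) : Prop :=
  ∃ (k : ℕ) (arcs : Fin k → A) (vs : Fin (k + 1) → V),
    1 ≤ k ∧ Function.Injective arcs ∧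
    Function.Injective (fun i : Fin k => vs i.castSucc) ∧
    vs (Fin.last k) = vs 0 ∧
    ∀ i : Fin k, arcs i ∈ S ∧
      ((tail (arcs i) = vs i.castSucc ∧ head (arcs i) = vs i.succ) ∨
        (head (arcs i) = vs i.castSucc ∧ tail (arcs i) = vs i.succ))

/-- One undirected step along an arc of `S`. -/
def undirStep (S : Set GArc) (v w : ℕ × ℕ) : Prop :=
  ∃ a ∈ S, (gTail a = v ∧ gHead a = w) ∨ (gTail a = w ∧ gHead a = v)

/-- One directed step along an arc of `S`. -/
def dirStep (S : Set GArc) (v w : ℕ × ℕ) : Prop :=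
  ∃ a ∈ S, gTail a = v ∧ gHead a = w

/-- `S` is a spanning tree of the `L`-by-`T` grid: all its arcs are grid arcs, any two
grid vertices are joined by an undirected path in `S`, and `S` has no undirected cycle. -/
def IsGridSpanningTree (L T : ℕ) (S : Set GArc) : Prop :=
  (∀ a ∈ S, ValidArc L T a) ∧
    (∀ v w : ℕ × ℕ, v.1 < L → v.2 < T → w.1 < L → w.2 < T →
      Relation.ReflTransGen (undirStep S) v w) ∧
    ¬ HasUndirCycle gTail gHead S

/-- Every grid vertex is accessible from row one via a directed path in `S`. -/
def Accessible (L T : ℕ) (S : Set GArc) : Prop :=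
  ∀ l t, l < L → t < T → ∃ j < T, Relation.ReflTransGen (dirStep S) (0, j) (l, t)

/-- The set of row-one columns `j` from which `(l,i)` is reachable by a directed path
in `S`; `κ_l(i)` is its least element. -/
def kappaSet (T' : ℕ) (S : Set GArc) (l i : ℕ) : Set ℕ :=
  {j | j < T' ∧ Relation.ReflTransGen (dirStep S) ((0, j) : ℕ × ℕ) (l, i)}

/-! If `κ' < κ`, a directed path from `(0, κ')` to `(l, i')` starts left of and ends weakly
right of a directed path from `(0, κ)` to `(l, i)`. Since arcs only go down or right, the
two paths meet, so `(0, κ')` reaches `(l, i)`, contradicting the minimality of `κ`. -/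

open Relation

variable {S : Set GArc}

lemma dirStep_eq_down_or_right {v w : ℕ × ℕ} (h : dirStep S v w) :
    w = (v.1 + 1, v.2) ∨ w = (v.1, v.2 + 1) := by
  obtain ⟨⟨down, l, t⟩, -, rfl, rfl⟩ := h
  cases down <;> simp [gHead, gTail]

lemma le_of_reflTransGen_dirStep {u v : ℕ × ℕ} (h : ReflTransGen (dirStep S) u v) :
    u ≤ v := by
  induction h with
  | refl => exact le_rfl
  | tail _ hstep ih =>
    refine ih.trans ?_
    rcases dirStep_eq_down_or_right hstep with rfl | rfl <;> simp [Prod.le_def]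

lemma reflTransGen_dirStep_through_row {r a b c : ℕ}
    (h : ReflTransGen (dirStep S) (r, a) (r, b)) (hac : a ≤ c) (hcb : c ≤ b) :
    ReflTransGen (dirStep S) (r, a) (r, c) ∧ ReflTransGen (dirStep S) (r, c) (r, b) := by
  generalize hu : ((r, a) : ℕ × ℕ) = u at h
  induction h using ReflTransGen.head_induction_on generalizing a with
  | refl =>
    obtain rfl : a = b := by simp_all
    obtain rfl : c = a := le_antisymm hcb hac
    exact ⟨.refl, .refl⟩
  | head hstep hrest ih =>
    subst hu
    rcases hac.eq_or_lt with rfl | hlt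
    · exact ⟨.refl, .head hstep hrest⟩
    rcases dirStep_eq_down_or_right hstep with rfl | rfl
    · have := (le_of_reflTransGen_dirStep hrest).1
      simp at this
    · obtain ⟨h₁, h₂⟩ := ih hlt rfl
      exact ⟨.head hstep h₁, h₂⟩

lemma exists_down_dirStep_of_reflTransGen {u v : ℕ × ℕ} {r : ℕ}
    (h : ReflTransGen (dirStep S) u v) (hu : u.1 ≤ r) (hv : r < v.1) :
    ∃ m, ReflTransGen (dirStep S) u (r, m) ∧ dirStep S (r, m) (r + 1, m) ∧
      ReflTransGen (dirStep S) (r + 1, m) v := by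
  induction h using ReflTransGen.head_induction_on with
  | refl => omega
  | head hstep hrest ih =>
    rename_i z w
    rcases dirStep_eq_down_or_right hstep with rfl | rfl
    · rcases hu.eq_or_lt with rfl | hlt
      · exact ⟨z.2, .refl, hstep, hrest⟩
      · obtain ⟨m, h₁, h₂, h₃⟩ := ih hlt
        exact ⟨m, .head hstep h₁, h₂, h₃⟩
    · obtain ⟨m, h₁, h₂, h₃⟩ := ih hu
      exact ⟨m, .head hstep h₁, h₂, h₃⟩

/-- Let `P` run from `x` to `(l, i')` through `(z.1, m)` and `Q` from `z` to `(l, i)`.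
Walking along `Q`, one keeps a vertex of `P` weakly left of the current vertex in its row,
until `Q` meets `P`. -/
lemma reflTransGen_dirStep_of_crossing {x z : ℕ × ℕ} {l i i' m : ℕ} (hii : i ≤ i')
    (hz : ReflTransGen (dirStep S) z (l, i)) (hm : m ≤ z.2)
    (hxP : ReflTransGen (dirStep S) x (z.1, m))
    (hPy : ReflTransGen (dirStep S) (z.1, m) (l, i')) :
    ReflTransGen (dirStep S) x (l, i) := by
  induction hz using ReflTransGen.head_induction_on generalizing m with
  | refl => exact hxP.trans (reflTransGen_dirStep_through_row hPy hm hii).1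
  | head hstep hrest ih =>
    rename_i z w
    rcases dirStep_eq_down_or_right hstep with rfl | rfl
    · have hrow : z.1 < l := by
        simpa using (le_of_reflTransGen_dirStep hrest).1
      obtain ⟨m', hProw, hPdown, hPrest⟩ := exists_down_dirStep_of_reflTransGen hPy le_rfl hrow
      rcases le_or_gt m' z.2 with hle | hlt
      · exact ih hle ((hxP.trans hProw).tail hPdown) hPrest
      · -- `P` enters row `z.1` left of `z` and leaves it right of `z`, so it passes through `z`.
        have hxz := hxP.trans (reflTransGen_dirStep_through_row hProw hm hlt.le).1
        exact hxz.trans (.head hstep hrest)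
    · exact ih (hm.trans (Nat.le_succ _)) hxP hPy

theorem kappa_monotone_general (T : ℕ) (S : Set GArc)
    (l i i' κ κ' : ℕ) (hii : i ≤ i')
    (hκ : IsLeast (kappaSet T S l i) κ) (hκ' : IsLeast (kappaSet T S l i') κ') :
    κ ≤ κ' := by
  rcases le_total κ κ' with h | h
  · exact h
  · exact hκ.2 ⟨hκ'.1.1, reflTransGen_dirStep_of_crossing hii hκ.1.2 h .refl hκ'.1.2⟩

/-- In a spanning tree of the grid in which every vertex is accessible from row one,
the function `κ_l` is non-decreasing. -/
theorem kappa_monotone (L T : ℕ) (S : Set GArc)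
    (htree : IsGridSpanningTree L T S) (hacc : Accessible L T S)
    (l i i' κ κ' : ℕ) (hl : l < L) (hi : i < T) (hi' : i' < T) (hii : i ≤ i')
    (hκ : IsLeast (kappaSet T S l i) κ) (hκ' : IsLeast (kappaSet T S l i') κ') :
    κ ≤ κ' :=
  kappa_monotone_general T S l i i' κ κ' hii hκ hκ'
end

section
/- With the same setup (spanning tree T_f of the grid accessible from row one, arc a removed, type 1 = in T_{f,1}, type 2B = in T_{f,2} with tree path from row one not containing a), in any row l > 1 there do not exist four vertices v_{l,i}, v_{l,j}, v_{l,i'}, v_{l,j'} with i < j < i' < j' alternating between type 1 and type 2B. -/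
/-- Vertex `(l,i)` is of type 1: it lies in the component of the tail of `a₀` after
deleting the tree arc `a₀`. -/
def Type1 (S : Set GArc) (a₀ : GArc) (l i : ℕ) : Prop :=
  Relation.ReflTransGen (undirStep (S \ {a₀})) (gTail a₀) (l, i)

/-- Vertex `(l,i)` is of type 2B: it lies in the component of the head of `a₀` after
deleting `a₀`, and the directed tree path from row one to `(l,i)` does not contain `a₀`. -/
def Type2B (T' : ℕ) (S : Set GArc) (a₀ : GArc) (l i : ℕ) : Prop :=
  Relation.ReflTransGen (undirStep (S \ {a₀})) (gHead a₀) (l, i) ∧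
    ∃ (κ n : ℕ) (p : ℕ → ℕ × ℕ), IsLeast (kappaSet T' S l i) κ ∧
      p 0 = (0, κ) ∧ p n = (l, i) ∧ (∀ s < n, dirStep S (p s) (p (s + 1))) ∧
      ¬ ∃ s < n, gTail a₀ = p s ∧ gHead a₀ = p (s + 1)

/-!
Delete the arc `a₀` from the tree. Its two sides are disjoint (otherwise `a₀` closes a cycle);
every type-1 vertex is reached from row one by a down-right staircase inside the tail side, and
every type-2B vertex by one inside the head side. Disjoint staircases ending in the same row
start in the same left-to-right order, so an alternation in row `l` yields an alternation
`x₁ < x₂ < x₃ < x₄` of the starting columns in row one, with `x₁, x₃` on one side and `x₂, x₄`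
on the other. Joining `x₁` to `x₃` and `x₂` to `x₄` inside the two sides gives two disjoint
grid walks with interleaved ends on the boundary row, which is impossible by a crossing-parity
(discrete Jordan curve) argument.
-/

open Relation

section Walk

variable {V : Type*} {R : V → V → Prop}

theorem Relation.ReflTransGen.exists_walk {u v : V} (h : ReflTransGen R u v) :
    ∃ (n : ℕ) (p : ℕ → V), p 0 = u ∧ p n = v ∧ ∀ s < n, R (p s) (p (s + 1)) := by
  induction h with
  | refl => exact ⟨0, fun _ => u, rfl, rfl, by simp⟩
  | @tail b c _ hbc ih =>
    obtain ⟨n, p, hp0, hpn, hstep⟩ := ih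
    refine ⟨n + 1, fun s => if s ≤ n then p s else c, by simp [hp0], by simp, fun s hs => ?_⟩
    obtain hs | rfl := Nat.lt_succ_iff_lt_or_eq.mp hs
    · simpa [hs.le, Nat.succ_le_of_lt hs] using hstep s hs
    · simpa [hpn] using hbc

theorem reflTransGen_of_walk {n : ℕ} {p : ℕ → V} (hstep : ∀ s < n, R (p s) (p (s + 1)))
    {s t : ℕ} (hst : s ≤ t) (htn : t ≤ n) : ReflTransGen R (p s) (p t) := by
  induction t, hst using Nat.le_induction with
  | base => exact .refl
  | succ t _ ih => exact (ih (by omega)).tail (hstep t (by omega))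

end Walk

section StepCount

open Finset
open scoped Classical

variable {V : Type*} {p : ℕ → V} {n : ℕ}

noncomputable def stepCount (p : ℕ → V) (f : V → V → Prop) (n : ℕ) : ℕ :=
  #{s ∈ range n | f (p s) (p (s + 1))}

theorem stepCount_congr {f g : V → V → Prop}
    (h : ∀ s < n, f (p s) (p (s + 1)) ↔ g (p s) (p (s + 1))) :
    stepCount p f n = stepCount p g n := by
  unfold stepCount
  congr 1
  exact filter_congr fun s hs => h s (mem_range.mp hs)

theorem stepCount_or {f g : V → V → Prop}
    (h : ∀ s < n, ¬(f (p s) (p (s + 1)) ∧ g (p s) (p (s + 1)))) :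
    stepCount p (fun x y => f x y ∨ g x y) n = stepCount p f n + stepCount p g n := by
  unfold stepCount
  rw [← card_union_of_disjoint
    (disjoint_filter.mpr fun s hs hf hg => h s (mem_range.mp hs) ⟨hf, hg⟩)]
  congr 1
  ext s
  simp only [mem_filter, mem_union]
  tauto

theorem even_stepCount_not_iff (I : V → Prop) :
    Even (stepCount p (fun x y => ¬(I x ↔ I y)) n) ↔ (I (p 0) ↔ I (p n)) := by
  induction n with
  | zero => simp [stepCount]
  | succ n ih =>
    unfold stepCount at ih ⊢
    rw [range_add_one, filter_insert]
    split_ifs with h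
    · rw [card_insert_of_notMem (by simp), Nat.even_add_one, ih]
      tauto
    · rw [ih]
      tauto

end StepCount

section Crossings

def GridAdj (x y : ℕ × ℕ) : Prop :=
  (y.1 = x.1 + 1 ∧ y.2 = x.2) ∨ (y.1 = x.1 ∧ y.2 = x.2 + 1) ∨
    (x.1 = y.1 + 1 ∧ x.2 = y.2) ∨ (x.1 = y.1 ∧ x.2 = y.2 + 1)

/-- The step `x → y` crosses the ray that leaves `v` between columns `v.2 - 1` and `v.2`
and runs through all rows `≥ v.1` (row indices grow downwards). -/
def CrossesRay (v x y : ℕ × ℕ) : Prop :=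
  x.1 = y.1 ∧ v.1 ≤ x.1 ∧ (x.2 + 1 = v.2 ∧ y.2 = v.2 ∨ y.2 + 1 = v.2 ∧ x.2 = v.2)

theorem crossesRay_zero_iff {x y : ℕ × ℕ} (h : GridAdj x y) (c : ℕ) :
    CrossesRay (0, c) x y ↔ ¬(c ≤ x.2 ↔ c ≤ y.2) := by
  unfold GridAdj at h
  unfold CrossesRay
  omega

theorem crossesRay_succ_iff {r c : ℕ} {x y : ℕ × ℕ} (hx : x ≠ (r, c)) (hy : y ≠ (r, c)) :
    CrossesRay (r + 1, c) x y ↔ CrossesRay (r, c) x y := by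
  obtain ⟨x1, x2⟩ := x
  obtain ⟨y1, y2⟩ := y
  simp only [ne_eq, Prod.mk.injEq] at hx hy
  unfold CrossesRay
  omega

theorem crossesRay_or_crossesRay_succ_iff {r c : ℕ} {x y : ℕ × ℕ} (h : GridAdj x y)
    (hx : x ≠ (r, c)) (hy : y ≠ (r, c)) :
    CrossesRay (r, c) x y ∨ CrossesRay (r, c + 1) x y ↔
      ¬(x.2 = c ∧ r ≤ x.1 ↔ y.2 = c ∧ r ≤ y.1) := by
  obtain ⟨x1, x2⟩ := x
  obtain ⟨y1, y2⟩ := y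
  simp only [ne_eq, Prod.mk.injEq] at hx hy
  unfold GridAdj at h
  unfold CrossesRay
  omega

noncomputable def crossings (p : ℕ → ℕ × ℕ) (n : ℕ) (v : ℕ × ℕ) : ℕ :=
  stepCount p (CrossesRay v) n

variable {p : ℕ → ℕ × ℕ} {n : ℕ}

theorem even_crossings_zero_iff (hp : ∀ s < n, GridAdj (p s) (p (s + 1))) (c : ℕ) :
    Even (crossings p n (0, c)) ↔ (c ≤ (p 0).2 ↔ c ≤ (p n).2) := by
  rw [crossings, stepCount_congr (g := fun x y => ¬(c ≤ x.2 ↔ c ≤ y.2))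
    fun s hs => crossesRay_zero_iff (hp s hs) c]
  exact even_stepCount_not_iff fun x : ℕ × ℕ => c ≤ x.2

theorem crossings_succ {r c : ℕ} (hv : ∀ s ≤ n, p s ≠ (r, c)) :
    crossings p n (r + 1, c) = crossings p n (r, c) :=
  stepCount_congr fun s hs => crossesRay_succ_iff (hv s hs.le) (hv (s + 1) hs)

theorem even_crossings_succ_iff (hp : ∀ s < n, GridAdj (p s) (p (s + 1)))
    (h0 : (p 0).1 = 0) (hn : (p n).1 = 0) {r c : ℕ} (hv : ∀ s ≤ n, p s ≠ (r, c)) :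
    Even (crossings p n (r, c + 1)) ↔ Even (crossings p n (r, c)) := by
  have hsum : crossings p n (r, c) + crossings p n (r, c + 1) =
      stepCount p (fun x y => ¬(x.2 = c ∧ r ≤ x.1 ↔ y.2 = c ∧ r ≤ y.1)) n := by
    rw [crossings, crossings, ← stepCount_or fun s _ => by unfold CrossesRay; omega]
    exact stepCount_congr fun s hs =>
      crossesRay_or_crossesRay_succ_iff (hp s hs) (hv s hs.le) (hv (s + 1) hs)
  have heven : Even (crossings p n (r, c) + crossings p n (r, c + 1)) := by
    rw [hsum, even_stepCount_not_iff]
    have h0' := hv 0 (Nat.zero_le n)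
    have hn' := hv n le_rfl
    rw [ne_eq, Prod.ext_iff] at h0' hn'
    omega
  exact (Nat.even_add.mp heven).symm

theorem even_crossings_iff_of_gridAdj (hp : ∀ s < n, GridAdj (p s) (p (s + 1)))
    (h0 : (p 0).1 = 0) (hn : (p n).1 = 0) {v w : ℕ × ℕ} (h : GridAdj v w)
    (hv : ∀ s ≤ n, p s ≠ v) (hw : ∀ s ≤ n, p s ≠ w) :
    Even (crossings p n v) ↔ Even (crossings p n w) := by
  obtain ⟨r, c⟩ := v
  obtain ⟨r', c'⟩ := w
  rcases h with ⟨h1, h2⟩ | ⟨h1, h2⟩ | ⟨h1, h2⟩ | ⟨h1, h2⟩ <;> dsimp only at h1 h2 <;> subst h1 h2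
  · rw [crossings_succ hv]
  · exact (even_crossings_succ_iff hp h0 hn hv).symm
  · rw [crossings_succ hw]
  · exact even_crossings_succ_iff hp h0 hn hw

/-- The parity of the number of crossings of `p` with the ray at a vertex is constant along `q`
but differs at the two ends of `q`. -/
theorem walks_meet_of_interleaved {p q : ℕ → ℕ × ℕ} {n m x₁ x₂ x₃ x₄ : ℕ}
    (hp : ∀ s < n, GridAdj (p s) (p (s + 1))) (hq : ∀ t < m, GridAdj (q t) (q (t + 1)))
    (hp0 : p 0 = (0, x₁)) (hpn : p n = (0, x₃)) (hq0 : q 0 = (0, x₂)) (hqm : q m = (0, x₄))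
    (h₁₂ : x₁ < x₂) (h₂₃ : x₂ < x₃) (h₃₄ : x₃ < x₄) :
    ∃ s ≤ n, ∃ t ≤ m, p s = q t := by
  by_contra! hdisj
  have hconst : ∀ t ≤ m, Even (crossings p n (q 0)) ↔ Even (crossings p n (q t)) := by
    intro t ht
    induction t, Nat.zero_le t using Nat.le_induction with
    | base => rfl
    | succ t _ ih =>
      exact (ih (by omega)).trans <| even_crossings_iff_of_gridAdj hp (by simp [hp0])
        (by simp [hpn]) (hq t ht) (fun s hs => hdisj s hs t (by omega)) (hdisj · · _ ht)
  have := hconst m le_rfl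
  rw [hq0, hqm, even_crossings_zero_iff hp, even_crossings_zero_iff hp, hp0, hpn] at this
  simp only at this
  omega

end Crossings

section Staircase

def DownRightStep (x y : ℕ × ℕ) : Prop :=
  y = (x.1 + 1, x.2) ∨ y = (x.1, x.2 + 1)

theorem DownRightStep.le {x y : ℕ × ℕ} (h : DownRightStep x y) : x ≤ y := by
  rcases h with rfl | rfl <;> simp [Prod.le_def]

theorem le_of_reflTransGen_downRightStep {x y : ℕ × ℕ} (h : ReflTransGen DownRightStep x y) :
    x ≤ y := by
  induction h with
  | refl => exact le_rfl
  | tail _ hyz ih => exact ih.trans hyz.le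

theorem Nat.exists_eq_of_le_of_le_add_one {f : ℕ → ℕ} {n r : ℕ}
    (hf : ∀ s < n, f (s + 1) ≤ f s + 1) (h0 : f 0 ≤ r) (hn : r ≤ f n) : ∃ s ≤ n, f s = r := by
  induction n with
  | zero => exact ⟨0, le_rfl, by omega⟩
  | succ n ih =>
    by_cases hr : r ≤ f n
    · obtain ⟨s, hs, hfs⟩ := ih (fun s hs => hf s (by omega)) hr
      exact ⟨s, by omega, hfs⟩
    · exact ⟨n + 1, le_rfl, by have := hf n (by omega); omega⟩

variable {p q : ℕ → ℕ × ℕ} {n m : ℕ}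

theorem lt_of_downRightStep_walks_disjoint (hp : ∀ s < n, DownRightStep (p s) (p (s + 1)))
    (hq : ∀ t < m, DownRightStep (q t) (q (t + 1))) (hp0 : (p 0).1 = 0) (hq0 : (q 0).1 = 0)
    (hstart : (q 0).2 ≤ (p 0).2) (hdisj : ∀ s ≤ n, ∀ t ≤ m, p s ≠ q t) :
    ∀ t ≤ m, ∀ s ≤ n, (p s).1 = (q t).1 → (q t).2 < (p s).2 := by
  have hmono {s s' : ℕ} (hss' : s ≤ s') (hs' : s' ≤ n) : p s ≤ p s' :=
    le_of_reflTransGen_downRightStep (reflTransGen_of_walk hp hss' hs')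
  intro t ht
  induction t, Nat.zero_le t using Nat.le_induction with
  | base =>
    intro s hs hrow
    have := (hmono (Nat.zero_le s) hs).2
    have := hdisj s hs 0 (Nat.zero_le m)
    rw [ne_eq, Prod.ext_iff] at this
    omega
  | succ t _ ih =>
    intro s hs hrow
    rcases hq t (by omega) with hstep | hstep <;> rw [hstep] at hrow ⊢ <;> dsimp only at hrow ⊢
    · obtain ⟨s', hs', hrow'⟩ := Nat.exists_eq_of_le_of_le_add_one (f := fun s => (p s).1)
        (fun s' hs' => by rcases hp s' (by omega) with h | h <;> simp [h])
        (by omega) (by omega : (q t).1 ≤ (p s).1)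
      exact (ih (by omega) s' (by omega) hrow').trans_le (hmono hs' hs).2
    · have := ih (by omega) s hs hrow
      have := hdisj s hs (t + 1) ht
      rw [hstep, ne_eq, Prod.ext_iff] at this
      omega

structure IsStaircase (C : Set (ℕ × ℕ)) (p : ℕ → ℕ × ℕ) (n : ℕ) (v : ℕ × ℕ) : Prop where
  start_row : (p 0).1 = 0
  last : p n = v
  step : ∀ s < n, DownRightStep (p s) (p (s + 1))
  mem : ∀ s ≤ n, p s ∈ C

theorem IsStaircase.start_lt {C C' : Set (ℕ × ℕ)} (hCC' : Disjoint C C') {l c c' : ℕ}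
    (hp : IsStaircase C p n (l, c)) (hq : IsStaircase C' q m (l, c')) (hcc' : c < c') :
    (p 0).2 < (q 0).2 := by
  by_contra! hstart
  have hdisj : ∀ s ≤ n, ∀ t ≤ m, p s ≠ q t := fun s hs t ht =>
    hCC'.ne_of_mem (hp.mem s hs) (hq.mem t ht)
  have := lt_of_downRightStep_walks_disjoint hp.step hq.step hp.start_row hq.start_row hstart
    hdisj m le_rfl n le_rfl (by rw [hp.last, hq.last])
  rw [hp.last, hq.last] at this
  exact absurd this (by simpa using hcc'.le)

end Staircase

section Cycle

theorem hasUndirCycle_of_injOn_walk {V A : Type*} {tail head : A → V} {S : Set A} {a₀ : A}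
    (ha₀ : a₀ ∈ S) {k : ℕ} {g : ℕ → V} {e : ℕ → A} (hg : Set.InjOn g {i | i ≤ k})
    (hg0 : g 0 = tail a₀) (hgk : g k = head a₀)
    (he : ∀ i < k, e i ∈ S ∧ e i ≠ a₀ ∧
      (tail (e i) = g i ∧ head (e i) = g (i + 1) ∨ tail (e i) = g (i + 1) ∧ head (e i) = g i)) :
    HasUndirCycle tail head S := by
  have hinj {i j : ℕ} (hi : i ≤ k) (hj : j ≤ k) (h : g i = g j) : i = j := hg hi hj h
  refine ⟨k + 1, fun i => if (i : ℕ) < k then e i else a₀, fun i => g (i % (k + 1)),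
    by omega, ?_, ?_, by simp, ?_⟩
  · intro i j hij
    dsimp only at hij
    split_ifs at hij with hi hj hj
    · obtain ⟨-, -, hei⟩ := he i hi
      obtain ⟨-, -, hej⟩ := he j hj
      rw [hij] at hei
      apply Fin.ext
      rcases hei with ⟨h1, h2⟩ | ⟨h1, h2⟩ <;> rcases hej with ⟨h3, h4⟩ | ⟨h3, h4⟩ <;>
        have := hinj (by omega) (by omega) (h1.symm.trans h3) <;>
        have := hinj (by omega) (by omega) (h2.symm.trans h4) <;>
        omega
    · exact absurd hij (he i hi).2.1
    · exact absurd hij.symm (he j hj).2.1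
    · exact Fin.ext (by omega)
  · intro i j hij
    simp only [Fin.val_castSucc, Nat.mod_eq_of_lt i.isLt, Nat.mod_eq_of_lt j.isLt] at hij
    exact Fin.ext (hinj (by omega) (by omega) hij)
  · intro i
    simp only [Fin.val_castSucc, Fin.val_succ, Nat.mod_eq_of_lt i.isLt]
    split_ifs with hi
    · obtain ⟨hS, -, hei⟩ := he i hi
      rw [Nat.mod_eq_of_lt (by omega)]
      exact ⟨hS, hei.imp_right And.symm⟩
    · have hik : (i : ℕ) = k := by omega
      rw [hik, Nat.mod_self, hg0, hgk]
      exact ⟨ha₀, Or.inr ⟨rfl, rfl⟩⟩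

instance (S : Set GArc) : Std.Symm (undirStep S) :=
  ⟨fun _ _ ⟨a, ha, h⟩ => ⟨a, ha, h.symm⟩⟩

theorem hasUndirCycle_of_reflTransGen {S : Set GArc} {a₀ : GArc} (ha₀ : a₀ ∈ S)
    (h : ReflTransGen (undirStep (S \ {a₀})) (gTail a₀) (gHead a₀)) :
    HasUndirCycle gTail gHead S := by
  let G := SimpleGraph.fromRel (undirStep (S \ {a₀}))
  have hreach {u v : ℕ × ℕ} (huv : ReflTransGen (undirStep (S \ {a₀})) u v) :
      G.Reachable u v := by
    rw [SimpleGraph.reachable_iff_reflTransGen]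
    induction huv with
    | refl => exact .refl
    | @tail v w _ hvw ih =>
      by_cases hvw' : v = w
      · exact hvw' ▸ ih
      · exact ih.tail ⟨hvw', Or.inl hvw⟩
  obtain ⟨w, hw⟩ := (hreach h).exists_isPath
  have hstep : ∀ i < w.length, ∃ a, a ∈ S ∧ a ≠ a₀ ∧
      (gTail a = w.getVert i ∧ gHead a = w.getVert (i + 1) ∨
        gTail a = w.getVert (i + 1) ∧ gHead a = w.getVert i) := by
    intro i hi
    obtain ⟨-, hadj⟩ := w.adj_getVert_succ hi
    obtain ⟨a, ⟨haS, ha⟩, hva⟩ := hadj.elim id (Std.Symm.symm _ _)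
    exact ⟨a, haS, ha, hva⟩
  choose! e he using hstep
  exact hasUndirCycle_of_injOn_walk ha₀ hw.getVert_injOn w.getVert_zero w.getVert_length he

end Cycle

section Components

def component (S : Set GArc) (b : ℕ × ℕ) : Set (ℕ × ℕ) :=
  {v | ReflTransGen (undirStep S) b v}

variable {S : Set GArc} {a₀ : GArc}

theorem mem_component_iff_of_reflTransGen {b v w : ℕ × ℕ} (h : ReflTransGen (undirStep S) v w) :
    v ∈ component S b ↔ w ∈ component S b :=
  ⟨fun hv => hv.trans h, fun hw => hw.trans (Std.Symm.symm _ _ h)⟩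

theorem reflTransGen_of_mem_component {b v w : ℕ × ℕ} (hv : v ∈ component S b)
    (hw : w ∈ component S b) : ReflTransGen (undirStep S) v w :=
  (Std.Symm.symm _ _ hv).trans hw

theorem disjoint_component_gTail_gHead (hS : ¬HasUndirCycle gTail gHead S) (ha₀ : a₀ ∈ S) :
    Disjoint (component (S \ {a₀}) (gTail a₀)) (component (S \ {a₀}) (gHead a₀)) :=
  Set.disjoint_left.mpr fun _ h₁ h₂ =>
    hS (hasUndirCycle_of_reflTransGen ha₀ (h₁.trans (Std.Symm.symm _ _ h₂)))

theorem undirStep.gridAdj {v w : ℕ × ℕ} (h : undirStep S v w) : GridAdj v w := by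
  obtain ⟨⟨b, r, c⟩, -, ⟨rfl, rfl⟩ | ⟨rfl, rfl⟩⟩ := h <;>
    cases b <;> simp [GridAdj, gTail, gHead]

theorem dirStep.downRightStep {v w : ℕ × ℕ} (h : dirStep S v w) : DownRightStep v w := by
  obtain ⟨⟨b, r, c⟩, -, rfl, rfl⟩ := h
  cases b <;> simp [DownRightStep, gTail, gHead]

-- If the path uses `a₀`, the part after its last use joins `gHead a₀` to `v`.
theorem mem_component_or_of_reflTransGen_dirStep {u v : ℕ × ℕ}
    (h : ReflTransGen (dirStep S) u v) :
    v ∈ component (S \ {a₀}) u ∨ v ∈ component (S \ {a₀}) (gHead a₀) := by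
  induction h using ReflTransGen.head_induction_on with
  | refl => exact Or.inl .refl
  | head huw _ ih =>
    obtain ⟨a, haS, rfl, rfl⟩ := huw
    by_cases ha : a = a₀
    · subst ha
      exact Or.inr (ih.elim id id)
    · exact ih.imp_left (ReflTransGen.head ⟨a, ⟨haS, ha⟩, Or.inl ⟨rfl, rfl⟩⟩)

theorem Type2B.exists_isStaircase {T l y : ℕ} (h : Type2B T S a₀ l y) :
    ∃ p n, IsStaircase (component (S \ {a₀}) (gHead a₀)) p n (l, y) := by
  obtain ⟨hy, _, n, p, -, hp0, hpn, hstep, hnot⟩ := h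
  have hstep' : ∀ s < n, undirStep (S \ {a₀}) (p s) (p (s + 1)) := fun s hs => by
    obtain ⟨a, haS, h₁, h₂⟩ := hstep s hs
    exact ⟨a, ⟨haS, fun ha => hnot ⟨s, hs, ha ▸ h₁, ha ▸ h₂⟩⟩, Or.inl ⟨h₁, h₂⟩⟩
  refine ⟨p, n, by simp [hp0], hpn, fun s hs => (hstep s hs).downRightStep, fun s hs => ?_⟩
  rw [mem_component_iff_of_reflTransGen (reflTransGen_of_walk hstep' hs le_rfl), hpn]
  exact hy

theorem Type1.exists_isStaircase {L T l x : ℕ} (hacc : Accessible L T S) (hl : l < L)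
    (hx : x < T)
    (hdisj : Disjoint (component (S \ {a₀}) (gTail a₀)) (component (S \ {a₀}) (gHead a₀)))
    (h : Type1 S a₀ l x) :
    ∃ p n, IsStaircase (component (S \ {a₀}) (gTail a₀)) p n (l, x) := by
  obtain ⟨t, -, ht⟩ := hacc l x hl hx
  obtain ⟨n, p, hp0, hpn, hstep⟩ := ht.exists_walk
  refine ⟨p, n, by simp [hp0], hpn, fun s hs => (hstep s hs).downRightStep, fun s hs => ?_⟩
  rcases mem_component_or_of_reflTransGen_dirStep (a₀ := a₀)
    (reflTransGen_of_walk hstep hs le_rfl) with hps | hhead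
  · rw [mem_component_iff_of_reflTransGen hps, hpn]
    exact h
  · exact absurd (hpn ▸ hhead) (hdisj.notMem_of_mem_left h)

theorem not_alternating_staircases {b₁ b₂ : ℕ × ℕ}
    (hdisj : Disjoint (component S b₁) (component S b₂)) {l c₁ c₂ c₃ c₄ : ℕ}
    (h₁₂ : c₁ < c₂) (h₂₃ : c₂ < c₃) (h₃₄ : c₃ < c₄) {p₁ p₂ p₃ p₄ : ℕ → ℕ × ℕ}
    {n₁ n₂ n₃ n₄ : ℕ} (hp₁ : IsStaircase (component S b₁) p₁ n₁ (l, c₁))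
    (hp₂ : IsStaircase (component S b₂) p₂ n₂ (l, c₂))
    (hp₃ : IsStaircase (component S b₁) p₃ n₃ (l, c₃))
    (hp₄ : IsStaircase (component S b₂) p₄ n₄ (l, c₄)) : False := by
  obtain ⟨n, p, hp0, hpn, hp⟩ :=
    (reflTransGen_of_mem_component (hp₁.mem 0 n₁.zero_le) (hp₃.mem 0 n₃.zero_le)).exists_walk
  obtain ⟨m, q, hq0, hqm, hq⟩ :=
    (reflTransGen_of_mem_component (hp₂.mem 0 n₂.zero_le) (hp₄.mem 0 n₄.zero_le)).exists_walk
  obtain ⟨s, hs, t, ht, hst⟩ := walks_meet_of_interleaved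
    (fun s hs => (hp s hs).gridAdj) (fun t ht => (hq t ht).gridAdj)
    (hp0.trans (Prod.ext hp₁.start_row rfl)) (hpn.trans (Prod.ext hp₃.start_row rfl))
    (hq0.trans (Prod.ext hp₂.start_row rfl)) (hqm.trans (Prod.ext hp₄.start_row rfl))
    (hp₁.start_lt hdisj hp₂ h₁₂) (hp₂.start_lt hdisj.symm hp₃ h₂₃) (hp₃.start_lt hdisj hp₄ h₃₄)
  have hps : p s ∈ component S b₁ := by
    rw [← mem_component_iff_of_reflTransGen (reflTransGen_of_walk hp s.zero_le hs), hp0]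
    exact hp₁.mem 0 n₁.zero_le
  have hqt : q t ∈ component S b₂ := by
    rw [← mem_component_iff_of_reflTransGen (reflTransGen_of_walk hq t.zero_le ht), hq0]
    exact hp₂.mem 0 n₂.zero_le
  exact hdisj.ne_of_mem hps hqt hst

end Components

theorem row_l_no_alternation_type1_type2B_general (L T : ℕ) (S : Set GArc)
    (htree : IsGridSpanningTree L T S) (hacc : Accessible L T S)
    (a₀ : GArc) (ha₀ : a₀ ∈ S)
    (l : ℕ) (hl : l < L)
    (i j i' j' : ℕ) (h₁ : i < j) (h₂ : j < i') (h₃ : i' < j') (h₄ : j' < T) :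
    ¬ ((Type1 S a₀ l i ∧ Type2B T S a₀ l j ∧ Type1 S a₀ l i' ∧ Type2B T S a₀ l j') ∨
      (Type2B T S a₀ l i ∧ Type1 S a₀ l j ∧ Type2B T S a₀ l i' ∧ Type1 S a₀ l j')) := by
  have hdisj := disjoint_component_gTail_gHead htree.2.2 ha₀
  rintro (⟨hi, hj, hi', hj'⟩ | ⟨hi, hj, hi', hj'⟩)
  · obtain ⟨p₁, n₁, hp₁⟩ := hi.exists_isStaircase hacc hl (by omega) hdisj
    obtain ⟨p₂, n₂, hp₂⟩ := hj.exists_isStaircase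
    obtain ⟨p₃, n₃, hp₃⟩ := hi'.exists_isStaircase hacc hl (by omega) hdisj
    obtain ⟨p₄, n₄, hp₄⟩ := hj'.exists_isStaircase
    exact not_alternating_staircases hdisj h₁ h₂ h₃ hp₁ hp₂ hp₃ hp₄
  · obtain ⟨p₁, n₁, hp₁⟩ := hi.exists_isStaircase
    obtain ⟨p₂, n₂, hp₂⟩ := hj.exists_isStaircase hacc hl (by omega) hdisj
    obtain ⟨p₃, n₃, hp₃⟩ := hi'.exists_isStaircase
    obtain ⟨p₄, n₄, hp₄⟩ := hj'.exists_isStaircase hacc hl h₄ hdisj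
    exact not_alternating_staircases hdisj.symm h₁ h₂ h₃ hp₁ hp₂ hp₃ hp₄

/-- In any row `l > 1` (0-indexed: `l ≥ 1`), four vertices cannot alternate between
type 1 and type 2B. -/
theorem row_l_no_alternation_type1_type2B (L T : ℕ) (S : Set GArc)
    (htree : IsGridSpanningTree L T S) (hacc : Accessible L T S)
    (a₀ : GArc) (ha₀ : a₀ ∈ S)
    (l : ℕ) (hl0 : 1 ≤ l) (hl : l < L)
    (i j i' j' : ℕ) (h₁ : i < j) (h₂ : j < i') (h₃ : i' < j') (h₄ : j' < T) :
    ¬ ((Type1 S a₀ l i ∧ Type2B T S a₀ l j ∧ Type1 S a₀ l i' ∧ Type2B T S a₀ l j') ∨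
      (Type2B T S a₀ l i ∧ Type1 S a₀ l j ∧ Type2B T S a₀ l i' ∧ Type1 S a₀ l j')) :=
  row_l_no_alternation_type1_type2B_general L T S htree hacc a₀ ha₀ l hl i j i' j' h₁ h₂ h₃ h₄
end

section
/- With the same setup, each row l of the grid contains at most two maximal intervals of type 2 vertices or at most two maximal intervals of type 1 vertices. -/
/-- The set of columns `t < T'` satisfying `P` decomposes into at most two maximal
intervals: equivalently, there is no in–out–in–out–in alternation pattern. -/
def AtMostTwoIntervalsOn (T' : ℕ) (P : ℕ → Prop) : Prop :=
  ¬ ∃ t₁ t₂ t₃ t₄ t₅, t₁ < t₂ ∧ t₂ < t₃ ∧ t₃ < t₄ ∧ t₄ < t₅ ∧ t₅ < T' ∧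
      P t₁ ∧ ¬ P t₂ ∧ P t₃ ∧ ¬ P t₄ ∧ P t₅

/-!
Removing the tree arc `a₀` leaves two components: that of `gHead a₀` (type 2) and that of
`gTail a₀` (type 1); type 2A vertices are those reached from `gHead a₀` by a directed path
avoiding `a₀`. Every other vertex is reached by such a path from a root in row `0`, and the root
lies in the vertex's component. Directed paths are monotone, so vertex-disjoint ones keep their
left-to-right order: four row vertices alternating between type 1 and type 2B have roots
alternating between the two components, and joining the roots inside each component gives two
disjoint walks in the half-plane with interleaved endpoints on its boundary, which a winding
parity argument rules out. As the type 2A vertices of a row form an interval, three blocks of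
each type in one row would produce such an alternation.
-/

section Alternation

variable {T : ℕ} {P Q A : ℕ → Prop}

/-- Since `A` is an interval inside `P`, at most one of `p₁, p₂, p₃` lies in `A`; the extra
`Q`-position `e` is needed only when that one is `p₂`. -/
theorem false_of_alternating (hQ : ∀ i < T, Q i ↔ ¬ P i) (hAP : ∀ i, A i → P i)
    (hA : ∀ i c k, i < c → c < k → k < T → A i → A k → A c)
    (hBQ : ∀ x₁ x₂ x₃ x₄, x₁ < x₂ → x₂ < x₃ → x₃ < x₄ → x₄ < T →
      P x₁ → ¬ A x₁ → Q x₂ → P x₃ → ¬ A x₃ → Q x₄ → False)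
    (hQB : ∀ x₁ x₂ x₃ x₄, x₁ < x₂ → x₂ < x₃ → x₃ < x₄ → x₄ < T →
      Q x₁ → P x₂ → ¬ A x₂ → Q x₃ → P x₄ → ¬ A x₄ → False)
    {p₁ n₁ p₂ n₂ p₃ e : ℕ} (h₁ : p₁ < n₁) (h₂ : n₁ < p₂) (h₃ : p₂ < n₂) (h₄ : n₂ < p₃)
    (h₅ : p₃ < T) (he : e < T) (hep : e < p₁ ∨ p₃ < e)
    (hp₁ : P p₁) (hn₁ : Q n₁) (hp₂ : P p₂) (hn₂ : Q n₂) (hp₃ : P p₃) (hQe : Q e) : False := by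
  have hn₁' := (hQ n₁ (by omega)).mp hn₁
  have hn₂' := (hQ n₂ (by omega)).mp hn₂
  by_cases a₂ : A p₂
  · by_cases a₁ : A p₁
    · exact hn₁' (hAP _ (hA p₁ n₁ p₂ h₁ h₂ (by omega) a₁ a₂))
    by_cases a₃ : A p₃
    · exact hn₂' (hAP _ (hA p₂ n₂ p₃ h₃ h₄ h₅ a₂ a₃))
    rcases hep with hep | hep
    · exact hQB e p₁ n₁ p₃ hep h₁ (by omega) h₅ hQe hp₁ a₁ hn₁ hp₃ a₃
    · exact hBQ p₁ n₁ p₃ e h₁ (by omega) hep he hp₁ a₁ hn₁ hp₃ a₃ hQe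
  by_cases a₁ : A p₁
  · by_cases a₃ : A p₃
    · exact hn₁' (hAP _ (hA p₁ n₁ p₃ h₁ (by omega) h₅ a₁ a₃))
    · exact hQB n₁ p₂ n₂ p₃ h₂ h₃ h₄ h₅ hn₁ hp₂ a₂ hn₂ hp₃ a₃
  · exact hBQ p₁ n₁ p₂ n₂ h₁ h₂ h₃ (by omega) hp₁ a₁ hn₁ hp₂ a₂ hn₂

theorem atMostTwoIntervalsOn_or_of_no_alternation (hQ : ∀ i < T, Q i ↔ ¬ P i)
    (hAP : ∀ i, A i → P i)
    (hA : ∀ i c k, i < c → c < k → k < T → A i → A k → A c)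
    (hBQ : ∀ x₁ x₂ x₃ x₄, x₁ < x₂ → x₂ < x₃ → x₃ < x₄ → x₄ < T →
      P x₁ → ¬ A x₁ → Q x₂ → P x₃ → ¬ A x₃ → Q x₄ → False)
    (hQB : ∀ x₁ x₂ x₃ x₄, x₁ < x₂ → x₂ < x₃ → x₃ < x₄ → x₄ < T →
      Q x₁ → P x₂ → ¬ A x₂ → Q x₃ → P x₄ → ¬ A x₄ → False) :
    AtMostTwoIntervalsOn T P ∨ AtMostTwoIntervalsOn T Q := by
  rw [or_iff_not_imp_left]
  intro hP ⟨s₁, s₂, s₃, s₄, s₅, hs₁, hs₂, hs₃, hs₄, hs₅, hq₁, hq₂, hq₃, hq₄, hq₅⟩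
  obtain ⟨t₁, t₂, t₃, t₄, t₅, ht₁, ht₂, ht₃, ht₄, ht₅, hp₁, hp₂, hp₃, hp₄, hp₅⟩ := not_not.mp hP
  have hq₁' := (hQ s₁ (by omega)).mp hq₁
  have hq₂' := not_not.mp ((hQ s₂ (by omega)).not.mp hq₂)
  have hq₄' := not_not.mp ((hQ s₄ (by omega)).not.mp hq₄)
  rcases lt_or_gt_of_ne (show t₁ ≠ s₁ by rintro rfl; exact hq₁' hp₁) with h | h
  · exact false_of_alternating hQ hAP hA hBQ hQB h hs₁ hs₂ hs₃ (by omega) hs₅ (.inr hs₄)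
      hp₁ hq₁ hq₂' hq₃ hq₄' hq₅
  · exact false_of_alternating hQ hAP hA hBQ hQB ht₁ ht₂ ht₃ ht₄ ht₅ (by omega) (.inl h)
      hp₁ ((hQ t₂ (by omega)).mpr hp₂) hp₃ ((hQ t₄ (by omega)).mpr hp₄) hp₅ hq₁

end Alternation

namespace Grid

open Relation

variable {S S₁ S₂ : Set GArc} {a₀ : GArc} {v w : ℕ × ℕ} {L T l : ℕ}

lemma dirStep_eq_or_eq (h : dirStep S v w) : w = (v.1 + 1, v.2) ∨ w = (v.1, v.2 + 1) := by
  obtain ⟨⟨_ | _, r, c⟩, -, rfl, rfl⟩ := h <;> simp [gHead, gTail]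

lemma fst_add_snd_of_dirStep (h : dirStep S v w) : w.1 + w.2 = v.1 + v.2 + 1 := by
  rcases dirStep_eq_or_eq h with rfl | rfl <;> simp only <;> omega

lemma undirStep_iff : undirStep S v w ↔ dirStep S v w ∨ dirStep S w v := by
  simp only [undirStep, dirStep]
  constructor
  · rintro ⟨a, ha, h | h⟩
    exacts [.inl ⟨a, ha, h⟩, .inr ⟨a, ha, h⟩]
  · rintro (⟨a, ha, h⟩ | ⟨a, ha, h⟩)
    exacts [⟨a, ha, .inl h⟩, ⟨a, ha, .inr h⟩]

lemma undirStep_symm (h : undirStep S v w) : undirStep S w v :=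
  undirStep_iff.mpr (undirStep_iff.mp h).symm

instance : Std.Symm (undirStep S) := ⟨fun _ _ => undirStep_symm⟩

lemma undirStep_of_dirStep (h : dirStep S v w) : undirStep S v w := undirStep_iff.mpr (.inl h)

lemma reflTransGen_undirStep_of_dirStep (h : ReflTransGen (dirStep S) v w) :
    ReflTransGen (undirStep S) v w :=
  ReflTransGen.mono (fun _ _ => undirStep_of_dirStep) _ _ h

lemma reflTransGen_undirStep_symm (h : ReflTransGen (undirStep S) v w) :
    ReflTransGen (undirStep S) w v :=
  ReflTransGen.stdSymm.symm _ _ h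

lemma le_of_reflTransGen_dirStep (h : ReflTransGen (dirStep S) v w) : v.1 ≤ w.1 ∧ v.2 ≤ w.2 := by
  induction h with
  | refl => omega
  | tail _ hstep _ => rcases dirStep_eq_or_eq hstep with rfl | rfl <;> simp only <;> omega

lemma eq_of_reflTransGen_dirStep (h : ReflTransGen (dirStep S) v w)
    (hd : w.1 + w.2 ≤ v.1 + v.2) : v = w := by
  rcases h.cases_head with rfl | ⟨u, hvu, huw⟩
  · rfl
  · have := fst_add_snd_of_dirStep hvu
    have := le_of_reflTransGen_dirStep huw
    omega

lemma exists_on_diag (h : ReflTransGen (dirStep S) v w) {d : ℕ}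
    (hvd : v.1 + v.2 ≤ d) (hdw : d ≤ w.1 + w.2) :
    ∃ z, ReflTransGen (dirStep S) v z ∧ ReflTransGen (dirStep S) z w ∧ z.1 + z.2 = d := by
  induction h with
  | refl => exact ⟨v, .refl, .refl, le_antisymm hdw hvd |>.symm⟩
  | @tail b c hvb hbc ih =>
    by_cases hd : d = c.1 + c.2
    · exact ⟨c, hvb.tail hbc, .refl, hd.symm⟩
    · obtain ⟨z, hvz, hzb, hz⟩ := ih (by have := fst_add_snd_of_dirStep hbc; omega)
      exact ⟨z, hvz, hzb.tail hbc, hz⟩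

theorem exists_common_of_cross {a b c d : ℕ × ℕ} (hP : ReflTransGen (dirStep S₁) a b)
    (hQ : ReflTransGen (dirStep S₂) c d) (hac : a.1 + a.2 = c.1 + c.2)
    (hbd : b.1 + b.2 = d.1 + d.2) (hca : a.2 ≤ c.2) (hdb : d.2 ≤ b.2) :
    ∃ z, ReflTransGen (dirStep S₁) a z ∧ ReflTransGen (dirStep S₁) z b ∧
      ReflTransGen (dirStep S₂) c z ∧ ReflTransGen (dirStep S₂) z d := by
  -- Step both paths in parallel: the column gap `c.2 - a.2` changes by at most one per step.
  induction hP using ReflTransGen.head_induction_on generalizing c with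
  | refl =>
    obtain rfl := eq_of_reflTransGen_dirStep hQ (by omega)
    obtain rfl : b = c := Prod.ext (by omega) (by omega)
    exact ⟨b, .refl, .refl, .refl, .refl⟩
  | @head a a' haa' hP ih =>
    by_cases hcol : a.2 = c.2
    · obtain rfl : a = c := Prod.ext (by omega) hcol
      exact ⟨a, .refl, .head haa' hP, .refl, hQ⟩
    rcases hQ.cases_head with rfl | ⟨c', hcc', hQ⟩
    · have := fst_add_snd_of_dirStep haa'
      have := le_of_reflTransGen_dirStep hP
      omega
    have := fst_add_snd_of_dirStep haa'
    have := fst_add_snd_of_dirStep hcc'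
    obtain ⟨z, haz, hzb, hcz, hzd⟩ := ih hQ (by omega)
      (by rcases dirStep_eq_or_eq haa' with rfl | rfl <;>
            rcases dirStep_eq_or_eq hcc' with rfl | rfl <;> simp only at * <;> omega)
    exact ⟨z, .head haa' haz, hzb, .head hcc' hcz, hzd⟩

theorem root_lt_of_disjoint {l m m' x x' : ℕ}
    (hp : ReflTransGen (dirStep S₁) (0, m) (l, x))
    (hp' : ReflTransGen (dirStep S₂) (0, m') (l, x')) (hxx' : x < x')
    (hdisj : ∀ z, ReflTransGen (dirStep S₁) (0, m) z → ReflTransGen (dirStep S₂) (0, m') z →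
      False) :
    m < m' := by
  by_contra! hm
  have hml := le_of_reflTransGen_dirStep hp
  obtain ⟨z₁, hz₁, hz₁x', hdz₁⟩ := exists_on_diag hp' (d := m) (by simpa using hm)
    (by omega)
  obtain ⟨z₂, hz₁z₂, hz₂x', hdz₂⟩ := exists_on_diag hz₁x' (d := l + x) (by omega) (by omega)
  have := le_of_reflTransGen_dirStep hz₂x'
  obtain ⟨z, hz₁z, -, hmz, -⟩ := exists_common_of_cross hz₁z₂ hp (by simpa using hdz₁)
    (by simpa using hdz₂) (by omega) (by omega)
  exact hdisj z hmz (hz₁.trans hz₁z)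

theorem exists_meet_of_between {l i j k m : ℕ}
    (hi : ReflTransGen (dirStep S₁) w (l, i)) (hk : ReflTransGen (dirStep S₁) w (l, k))
    (hB : ReflTransGen (dirStep S₂) (0, m) (l, j)) (hij : i < j) (hjk : j < k) :
    ∃ z, ReflTransGen (dirStep S₁) w z ∧ ReflTransGen (dirStep S₂) z (l, j) := by
  have hwi := le_of_reflTransGen_dirStep hi
  have hmj := le_of_reflTransGen_dirStep hB
  obtain ⟨q, hwq, hqk, hq⟩ := exists_on_diag hk (d := l + j) (by omega) (by omega)
  have hql := le_of_reflTransGen_dirStep hqk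
  rcases le_or_gt (w.1 + w.2) m with hwm | hmw
  · obtain ⟨q₀, hwq₀, hq₀q, hq₀⟩ := exists_on_diag hwq (d := m) hwm (by omega)
    obtain ⟨z, hq₀z, -, -, hzj⟩ := exists_common_of_cross hq₀q hB (by simpa using hq₀)
      (by simpa using hq) (by omega) (by omega)
    exact ⟨z, hwq₀.trans hq₀z, hzj⟩
  obtain ⟨r, -, hrj, hr⟩ := exists_on_diag hB (d := w.1 + w.2) (by omega) (by omega)
  rcases le_total r.2 w.2 with hrw | hwr
  · obtain ⟨r', hrr', hr'j, hr'⟩ := exists_on_diag hrj (d := l + i) (by omega) (by omega)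
    have := le_of_reflTransGen_dirStep hr'j
    obtain ⟨z, -, hzr', hwz, -⟩ := exists_common_of_cross hrr' hi hr
      (by simpa using hr') hrw (by omega)
    exact ⟨z, hwz, hzr'.trans hr'j⟩
  · obtain ⟨z, hwz, -, -, hzj⟩ := exists_common_of_cross hwq hrj hr.symm
      (by simpa using hq) hwr (by omega)
    exact ⟨z, hwz, hzj⟩

lemma undirStep_ne (h : undirStep S v w) : v ≠ w := by
  rintro rfl
  rcases undirStep_iff.mp h with h | h <;> have := fst_add_snd_of_dirStep h <;> omega

lemma reflTransGen_dirStep_diff_singleton (h : ReflTransGen (dirStep S) v w) :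
    ReflTransGen (dirStep (S \ {a₀})) v w ∨ ReflTransGen (dirStep (S \ {a₀})) (gHead a₀) w := by
  induction h with
  | refl => exact .inl .refl
  | @tail b c _ hbc ih =>
    obtain ⟨a, ha, rfl, rfl⟩ := hbc
    by_cases haa₀ : a = a₀
    · exact .inr (haa₀ ▸ .refl)
    · have hstep : dirStep (S \ {a₀}) (gTail a) (gHead a) := ⟨a, ⟨ha, haa₀⟩, rfl, rfl⟩
      exact ih.imp (·.tail hstep) (·.tail hstep)

lemma reflTransGen_gTail_or_gHead (h : ReflTransGen (undirStep S) (gTail a₀) v) :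
    ReflTransGen (undirStep (S \ {a₀})) (gTail a₀) v ∨
      ReflTransGen (undirStep (S \ {a₀})) (gHead a₀) v := by
  induction h with
  | refl => exact .inl .refl
  | @tail b c _ hbc ih =>
    obtain ⟨a, ha, hends⟩ := hbc
    by_cases haa₀ : a = a₀
    · subst haa₀
      rcases hends with ⟨-, rfl⟩ | ⟨rfl, -⟩
      exacts [.inr .refl, .inl .refl]
    · have hstep : undirStep (S \ {a₀}) b c := ⟨a, ⟨ha, haa₀⟩, hends⟩
      exact ih.imp (·.tail hstep) (·.tail hstep)

theorem hasUndirCycle_of_isChain (ha₀ : a₀ ∈ S) {L : List (ℕ × ℕ)} (hL : L.Nodup)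
    (hc : L.IsChain (undirStep (S \ {a₀}))) (hne : L ≠ []) (hh : L.head hne = gHead a₀)
    (hl : L.getLast hne = gTail a₀) : HasUndirCycle gTail gHead S := by
  choose arc harc hends using List.isChain_iff_getElem.mp hc
  have hpos : 0 < L.length := List.length_pos_iff.mpr hne
  refine ⟨L.length, fun i => if h : i.1 + 1 < L.length then arc i h else a₀,
    fun i => if h : i.1 < L.length then L[i.1] else gHead a₀, hpos, ?_, ?_, ?_, ?_⟩
  · intro i j hij
    simp only at hij
    split_ifs at hij with hi hj hj
    · have hi' := hends i hi
      rw [hij] at hi'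
      rcases hi' with ⟨h₁, h₂⟩ | ⟨h₁, h₂⟩ <;> rcases hends j hj with ⟨h₃, h₄⟩ | ⟨h₃, h₄⟩ <;>
        · have e₁ := hL.getElem_inj_iff.mp (h₁.symm.trans h₃)
          have e₂ := hL.getElem_inj_iff.mp (h₂.symm.trans h₄)
          exact Fin.ext (by omega)
    · exact absurd hij (harc i hi).2
    · exact absurd hij.symm (harc j hj).2
    · exact Fin.ext (by omega)
  · intro i j hij
    simp only [Fin.val_castSucc, i.isLt, j.isLt, dite_true] at hij
    exact Fin.ext (hL.getElem_inj_iff.mp hij)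
  · simp [hpos, ← hh, List.head_eq_getElem]
  · intro i
    simp only [Fin.val_castSucc, Fin.val_succ, i.isLt, dite_true]
    split_ifs with hi
    · exact ⟨(harc i hi).1, (hends i hi).imp id fun h => ⟨h.2, h.1⟩⟩
    · refine ⟨ha₀, .inl ⟨?_, rfl⟩⟩
      rw [← hl, List.getLast_eq_getElem]
      congr 1
      omega

theorem not_reflTransGen_gHead_gTail (ha₀ : a₀ ∈ S) (hS : ¬ HasUndirCycle gTail gHead S) :
    ¬ ReflTransGen (undirStep (S \ {a₀})) (gHead a₀) (gTail a₀) := by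
  classical
  intro h
  have hreach : (SimpleGraph.fromRel (undirStep (S \ {a₀}))).Reachable (gHead a₀) (gTail a₀) :=
    (SimpleGraph.reachable_iff_reflTransGen _ _).mpr <|
      ReflTransGen.mono
        (fun _ _ hs => (SimpleGraph.fromRel_adj _ _ _).mpr ⟨undirStep_ne hs, .inl hs⟩) _ _ h
  obtain ⟨p⟩ := hreach
  refine hS (hasUndirCycle_of_isChain ha₀ p.toPath.2.support_nodup ?_ _
    p.toPath.1.head_support p.toPath.1.getLast_support)
  refine p.toPath.1.isChain_adj_support.imp fun x y hxy => ?_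
  obtain ⟨-, hxy | hyx⟩ := (SimpleGraph.fromRel_adj _ _ _).mp hxy
  exacts [hxy, undirStep_symm hyx]

lemma undirStep_adj (h : undirStep S v w) :
    (w.1 = v.1 ∧ (w.2 = v.2 + 1 ∨ v.2 = w.2 + 1)) ∨
      (w.2 = v.2 ∧ (w.1 = v.1 + 1 ∨ v.1 = w.1 + 1)) := by
  rcases undirStep_iff.mp h with h | h <;> rcases dirStep_eq_or_eq h with rfl | rfl <;> simp

/-- The number of crossings of a walk with the half-line `{(r, γ + ε) | r ≤ ρ}`. -/
def rayCrossings (ρ γ : ℕ) : List (ℕ × ℕ) → ℕ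
  | x :: y :: t =>
    (if x.1 = y.1 ∧ x.1 ≤ ρ ∧ min x.2 y.2 = γ ∧ max x.2 y.2 = γ + 1 then 1 else 0) +
      rayCrossings ρ γ (y :: t)
  | _ => 0

lemma rayCrossings_succ_row {ρ γ : ℕ} :
    ∀ {Q : List (ℕ × ℕ)}, (ρ + 1, γ) ∉ Q → rayCrossings (ρ + 1) γ Q = rayCrossings ρ γ Q
  | x :: y :: t, h => by
    have ih := rayCrossings_succ_row (Q := y :: t) fun h' => h (List.mem_cons_of_mem x h')
    simp only [List.mem_cons, not_or, Prod.ext_iff] at h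
    simp only [rayCrossings, ih]
    split_ifs <;> omega
  | [], _ | [_], _ => rfl

lemma rayCrossings_zero_row {γ : ℕ} :
    ∀ {Q : List (ℕ × ℕ)}, (0, γ) ∉ Q → rayCrossings 0 γ Q = 0
  | x :: y :: t, h => by
    have ih := rayCrossings_zero_row (Q := y :: t) fun h' => h (List.mem_cons_of_mem x h')
    simp only [List.mem_cons, not_or, Prod.ext_iff] at h
    simp only [rayCrossings, ih]
    split_ifs <;> omega
  | [], _ | [_], _ => rfl

/-- Moving the half-line one column to the right changes the number of crossings by the number
of times the walk enters or leaves the segment `{(r, γ + 1) | r ≤ ρ}`, which has the parity of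
the number of endpoints of the walk on that segment. -/
lemma rayCrossings_add_succ_col {ρ γ : ℕ} :
    ∀ (x : ℕ × ℕ) (t : List (ℕ × ℕ)) (z : ℕ × ℕ), (x :: t).IsChain (undirStep S) →
      (x :: t).getLast (List.cons_ne_nil x t) = z → (ρ, γ + 1) ∉ x :: t →
      (rayCrossings ρ γ (x :: t) + rayCrossings ρ (γ + 1) (x :: t) +
        (if x.2 = γ + 1 ∧ x.1 ≤ ρ then 1 else 0) +
        (if z.2 = γ + 1 ∧ z.1 ≤ ρ then 1 else 0)) % 2 = 0
  | x, [], z, _, hz, _ => by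
    obtain rfl : x = z := hz
    simp only [rayCrossings]
    split_ifs <;> omega
  | x, y :: t, z, hc, hz, h => by
    rw [List.isChain_cons_cons] at hc
    have ih := rayCrossings_add_succ_col y t z hc.2 hz fun h' => h (List.mem_cons_of_mem x h')
    have hxy := undirStep_adj hc.1
    simp only [List.mem_cons, not_or, Prod.ext_iff] at h
    simp only [rayCrossings] at ih ⊢
    split_ifs at ih ⊢ <;> omega

/-- The parity of the winding number, around the point `(v.1, v.2 + ε)`, of the walk `Q` from
`(0, m₂)` to `(0, m₄)` closed up by an arc below row `0`; that arc crosses the half-line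
`{(r, v.2 + ε) | r ≤ v.1}` iff `m₂ ≤ v.2 < m₄`. -/
def windingParity (Q : List (ℕ × ℕ)) (m₂ m₄ : ℕ) (v : ℕ × ℕ) : ℕ :=
  (rayCrossings v.1 v.2 Q + if m₂ ≤ v.2 ∧ v.2 < m₄ then 1 else 0) % 2

section Walk

variable {m₂ m₄ : ℕ} {t : List (ℕ × ℕ)}

lemma windingParity_eq_of_dirStep (hm : m₂ < m₄) (hQ : ((0, m₂) :: t).IsChain (undirStep S₂))
    (hlast : ((0, m₂) :: t).getLast (List.cons_ne_nil _ _) = (0, m₄))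
    (h : dirStep S₁ v w) (hw : w ∉ (0, m₂) :: t) :
    windingParity ((0, m₂) :: t) m₂ m₄ v = windingParity ((0, m₂) :: t) m₂ m₄ w := by
  rcases dirStep_eq_or_eq h with rfl | rfl
  · simp only [windingParity, rayCrossings_succ_row hw]
  · have := rayCrossings_add_succ_col (ρ := v.1) (γ := v.2) _ _ _ hQ hlast hw
    simp only [windingParity]
    split_ifs at this ⊢ <;> omega

lemma windingParity_eq_of_reflTransGen {c z : ℕ × ℕ} (hm : m₂ < m₄)
    (hQ : ((0, m₂) :: t).IsChain (undirStep S₂))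
    (hlast : ((0, m₂) :: t).getLast (List.cons_ne_nil _ _) = (0, m₄))
    (hc : ∀ u, ReflTransGen (undirStep S₁) c u → u ∉ (0, m₂) :: t)
    (h : ReflTransGen (undirStep S₁) c z) :
    windingParity ((0, m₂) :: t) m₂ m₄ z = windingParity ((0, m₂) :: t) m₂ m₄ c := by
  induction h with
  | refl => rfl
  | @tail b d hcb hbd ih =>
    rw [← ih]
    rcases undirStep_iff.mp hbd with hbd' | hbd'
    · exact (windingParity_eq_of_dirStep hm hQ hlast hbd' (hc d (hcb.tail hbd))).symm
    · exact windingParity_eq_of_dirStep hm hQ hlast hbd' (hc b hcb)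

end Walk

/-- Discrete Jordan curve argument: the winding parity of a walk from `(0, m₂)` to `(0, m₄)` in
the component of `c'` is constant on the component of `c`, but differs at `(0, m₁)` and
`(0, m₃)`. -/
theorem false_of_interleaved_row_zero {c c' : ℕ × ℕ} {m₁ m₂ m₃ m₄ : ℕ}
    (hdisj : ∀ z, ReflTransGen (undirStep S) c z → ReflTransGen (undirStep S) c' z → False)
    (h₁₂ : m₁ < m₂) (h₂₃ : m₂ < m₃) (h₃₄ : m₃ < m₄)
    (hc₁ : ReflTransGen (undirStep S) c (0, m₁)) (hc₂ : ReflTransGen (undirStep S) c' (0, m₂))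
    (hc₃ : ReflTransGen (undirStep S) c (0, m₃)) (hc₄ : ReflTransGen (undirStep S) c' (0, m₄)) :
    False := by
  obtain ⟨t, hQ, hlast⟩ :=
    List.exists_isChain_cons_of_relationReflTransGen ((reflTransGen_undirStep_symm hc₂).trans hc₄)
  have hQc' : ∀ u ∈ (0, m₂) :: t, ReflTransGen (undirStep S) c' u :=
    hQ.induction _ _ (fun _ _ hxy hx => hx.tail hxy) fun _ => hc₂
  have hc : ∀ u, ReflTransGen (undirStep S) c u → u ∉ (0, m₂) :: t :=
    fun u hu huQ => hdisj u hu (hQc' u huQ)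
  have h₁ := windingParity_eq_of_reflTransGen (by omega) hQ hlast hc hc₁
  have h₃ := windingParity_eq_of_reflTransGen (by omega) hQ hlast hc hc₃
  simp only [windingParity, rayCrossings_zero_row (hc _ hc₁), rayCrossings_zero_row (hc _ hc₃)]
    at h₁ h₃
  split_ifs at h₁ h₃ <;> omega

/-- Disjoint monotone paths keep their order, so the roots interleave like the vertices. -/
theorem false_of_interleaved_roots {c c' : ℕ × ℕ} {l x₁ x₂ x₃ x₄ : ℕ}
    (hdisj : ∀ z, ReflTransGen (undirStep S) c z → ReflTransGen (undirStep S) c' z → False)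
    (h₁₂ : x₁ < x₂) (h₂₃ : x₂ < x₃) (h₃₄ : x₃ < x₄)
    (hr₁ : ∃ m, ReflTransGen (dirStep S) (0, m) (l, x₁))
    (hr₂ : ∃ m, ReflTransGen (dirStep S) (0, m) (l, x₂))
    (hr₃ : ∃ m, ReflTransGen (dirStep S) (0, m) (l, x₃))
    (hr₄ : ∃ m, ReflTransGen (dirStep S) (0, m) (l, x₄))
    (hc₁ : ReflTransGen (undirStep S) c (l, x₁)) (hc₂ : ReflTransGen (undirStep S) c' (l, x₂))
    (hc₃ : ReflTransGen (undirStep S) c (l, x₃)) (hc₄ : ReflTransGen (undirStep S) c' (l, x₄)) :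
    False := by
  have root : ∀ {d x m}, ReflTransGen (undirStep S) d (l, x) →
      ReflTransGen (dirStep S) (0, m) (l, x) → ReflTransGen (undirStep S) d (0, m) :=
    fun hd hm => hd.trans (reflTransGen_undirStep_symm (reflTransGen_undirStep_of_dirStep hm))
  have apart : ∀ {u u' z}, ReflTransGen (undirStep S) c u → ReflTransGen (undirStep S) c' u' →
      ReflTransGen (dirStep S) u z → ReflTransGen (dirStep S) u' z → False :=
    fun hu hu' hz hz' => hdisj _ (hu.trans (reflTransGen_undirStep_of_dirStep hz))
      (hu'.trans (reflTransGen_undirStep_of_dirStep hz'))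
  obtain ⟨m₁, p₁⟩ := hr₁
  obtain ⟨m₂, p₂⟩ := hr₂
  obtain ⟨m₃, p₃⟩ := hr₃
  obtain ⟨m₄, p₄⟩ := hr₄
  have t₁ := root hc₁ p₁
  have t₂ := root hc₂ p₂
  have t₃ := root hc₃ p₃
  have t₄ := root hc₄ p₄
  exact false_of_interleaved_row_zero hdisj
    (root_lt_of_disjoint p₁ p₂ h₁₂ fun _ hz hz' => apart t₁ t₂ hz hz')
    (root_lt_of_disjoint p₂ p₃ h₂₃ fun _ hz hz' => apart t₃ t₂ hz' hz)
    (root_lt_of_disjoint p₃ p₄ h₃₄ fun _ hz hz' => apart t₃ t₄ hz hz') t₁ t₂ t₃ t₄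

lemma gTail_lt_of_validArc (h : ValidArc L T a₀) : (gTail a₀).1 < L ∧ (gTail a₀).2 < T := by
  obtain ⟨_ | _, r, c⟩ := a₀ <;> simp [ValidArc, gTail] at h ⊢ <;> omega

lemma reflTransGen_gTail_iff (hS : IsGridSpanningTree L T S) (ha₀ : a₀ ∈ S) (hl : l < L)
    {i : ℕ} (hi : i < T) :
    ReflTransGen (undirStep (S \ {a₀})) (gTail a₀) (l, i) ↔
      ¬ ReflTransGen (undirStep (S \ {a₀})) (gHead a₀) (l, i) := by
  obtain ⟨hvalid, hconn, hcyc⟩ := hS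
  refine ⟨fun ht hh => not_reflTransGen_gHead_gTail ha₀ hcyc
    (hh.trans (reflTransGen_undirStep_symm ht)), fun hh => ?_⟩
  have ht := gTail_lt_of_validArc (hvalid a₀ ha₀)
  exact (reflTransGen_gTail_or_gHead (hconn _ (l, i) ht.1 ht.2 hl hi)).resolve_right hh

/-- The root path of `(l, c)` must meet one of the paths from `gHead a₀` to `(l, i)` and
`(l, k)`. -/
theorem reflTransGen_dirStep_gHead_of_between (hacc : Accessible L T S) (hl : l < L)
    {i c k : ℕ} (hic : i < c) (hck : c < k) (hk : k < T)
    (hi : ReflTransGen (dirStep (S \ {a₀})) (gHead a₀) (l, i))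
    (hk' : ReflTransGen (dirStep (S \ {a₀})) (gHead a₀) (l, k)) :
    ReflTransGen (dirStep (S \ {a₀})) (gHead a₀) (l, c) := by
  obtain ⟨m, -, hm⟩ := hacc l c hl (by omega)
  obtain ⟨z, hz, hzc⟩ := exists_meet_of_between hi hk' hm hic hck
  exact (reflTransGen_dirStep_diff_singleton hzc).elim hz.trans id

lemma exists_root (hacc : Accessible L T S) (hl : l < L) {x : ℕ} (hx : x < T)
    (hA : ¬ ReflTransGen (dirStep (S \ {a₀})) (gHead a₀) (l, x)) :
    ∃ m, ReflTransGen (dirStep (S \ {a₀})) (0, m) (l, x) := by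
  obtain ⟨m, -, hm⟩ := hacc l x hl hx
  exact ⟨m, (reflTransGen_dirStep_diff_singleton hm).resolve_right hA⟩

end Grid

open Relation Grid

/-- Each row of the grid contains at most two maximal intervals of type 2 vertices, or at
most two maximal intervals of type 1 vertices (types taken w.r.t. the spanning tree `S`
with the tree arc `a₀` removed). -/
theorem row_at_most_two_maximal_intervals (L T : ℕ) (S : Set GArc)
    (htree : IsGridSpanningTree L T S) (hacc : Accessible L T S)
    (a₀ : GArc) (ha₀ : a₀ ∈ S) (l : ℕ) (hl : l < L) :
    AtMostTwoIntervalsOn T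
        (fun i => Relation.ReflTransGen (undirStep (S \ {a₀})) (gHead a₀) (l, i)) ∨
      AtMostTwoIntervalsOn T
        (fun i => Relation.ReflTransGen (undirStep (S \ {a₀})) (gTail a₀) (l, i)) := by
  have hdisj : ∀ z, ReflTransGen (undirStep (S \ {a₀})) (gHead a₀) z →
      ReflTransGen (undirStep (S \ {a₀})) (gTail a₀) z → False := fun z hh ht =>
    not_reflTransGen_gHead_gTail ha₀ htree.2.2 (hh.trans (reflTransGen_undirStep_symm ht))
  have hAP : ∀ {i}, ReflTransGen (dirStep (S \ {a₀})) (gHead a₀) (l, i) →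
      ReflTransGen (undirStep (S \ {a₀})) (gHead a₀) (l, i) :=
    reflTransGen_undirStep_of_dirStep
  have root {x} (hx : x < T) := exists_root (a₀ := a₀) hacc hl hx
  refine atMostTwoIntervalsOn_or_of_no_alternation
    (fun _ hi => reflTransGen_gTail_iff htree ha₀ hl hi) (fun _ => hAP)
    (fun _ _ _ hic hck hk => reflTransGen_dirStep_gHead_of_between hacc hl hic hck hk) ?_ ?_
  · intro x₁ x₂ x₃ x₄ h₁₂ h₂₃ h₃₄ h₄ hp₁ a₁ hq₂ hp₃ a₃ hq₄
    exact false_of_interleaved_roots hdisj h₁₂ h₂₃ h₃₄ (root (by omega) a₁)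
      (root (by omega) fun h => hdisj _ (hAP h) hq₂) (root (by omega) a₃)
      (root h₄ fun h => hdisj _ (hAP h) hq₄) hp₁ hq₂ hp₃ hq₄
  · intro x₁ x₂ x₃ x₄ h₁₂ h₂₃ h₃₄ h₄ hq₁ hp₂ a₂ hq₃ hp₄ a₄
    exact false_of_interleaved_roots (fun z ht hh => hdisj z hh ht) h₁₂ h₂₃ h₃₄
      (root (by omega) fun h => hdisj _ (hAP h) hq₁) (root (by omega) a₂)
      (root (by omega) fun h => hdisj _ (hAP h) hq₃) (root h₄ a₄) hq₁ hp₂ hq₃ hp₄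
end
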